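/- arXiv:1502.01658 — 3 statements merged into one kernel-verified Lean document; each statement's English description precedes it below -/
import Mathlib

section
/- Let Γ̂ be symmetric positive semidefinite and D_α a diagonal matrix with positive diagonal entries α_i, and let μ̂, β ∈ ℝ^N with β_i ≥ 0. Then for every w ∈ ℝ^N, max over (R, v) with R = Γ̂ + E, E symmetric, |E_{ij}| ≤ (D_α)_{ij}, and |v_i − μ̂_i| ≤ β_i, of wᵀRw − vᵀw equals wᵀΓ̂w − wᵀμ̂ + Σ_i β_i|w_i| + Σ_i α_i w_i². Consequently, the robust optimization problem min_w max_{R,v} wᵀRw − vᵀw is equivalent to the weighted elastic net penalized problem min_w wᵀΓ̂w − wᵀμ̂ + Σ_i β_i|w_i| + Σ_i α_i w_i². -/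
open Matrix BigOperators

private lemma real_sign_mul_self' (x : ℝ) : Real.sign x * x = |x| := by
  rcases lt_trichotomy x 0 with h | h | h
  · rw [Real.sign_of_neg h, abs_of_neg h]; ring
  · simp [h]
  · rw [Real.sign_of_pos h, abs_of_pos h]; ring

private lemma abs_sign_le_one (x : ℝ) : |Real.sign x| ≤ 1 := by
  rcases lt_trichotomy x 0 with h | h | h
  · rw [Real.sign_of_neg h]; norm_num
  · simp [h]
  · rw [Real.sign_of_pos h]; norm_num

/-- For `Γ̂` PSD and `D_α = diag(α)` with `α_i > 0`, the worst-case
objective `max_{R,v} wᵀRw − vᵀw` over `R = Γ̂ + E`, `E` symmetric with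
`|E_{ij}| ≤ (D_α)_{ij}`, and `|v_i − μ̂_i| ≤ β_i`, equals the weighted elastic
net objective `wᵀΓ̂w − wᵀμ̂ + Σ_i β_i|w_i| + Σ_i α_i w_i²`; consequently the
robust problem and the penalized problem have the same minimizers. -/
theorem stmt3 (N : ℕ) (Γ : Matrix (Fin N) (Fin N) ℝ) (hΓ : Γ.PosSemidef)
    (α μ β : Fin N → ℝ) (hα : ∀ i, 0 < α i) (hβ : ∀ i, 0 ≤ β i)
    (g pen : (Fin N → ℝ) → ℝ)
    (hg : ∀ w, IsGreatest {x : ℝ | ∃ E : Matrix (Fin N) (Fin N) ℝ,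
        ∃ v : Fin N → ℝ, E.IsSymm ∧ (∀ i j, |E i j| ≤ Matrix.diagonal α i j) ∧
        (∀ i, |v i - μ i| ≤ β i) ∧ x = w ⬝ᵥ ((Γ + E) *ᵥ w) - v ⬝ᵥ w} (g w))
    (hpen : ∀ w, pen w = w ⬝ᵥ (Γ *ᵥ w) - w ⬝ᵥ μ
        + ∑ i, β i * |w i| + ∑ i, α i * (w i) ^ 2) :
    (∀ w, g w = pen w) ∧
    (∀ w0 : Fin N → ℝ, (∀ w, g w0 ≤ g w) ↔ (∀ w, pen w0 ≤ pen w)) := by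
  have key : ∀ w, g w = pen w := by
    intro w
    apply (hg w).unique
    constructor
    · -- membership: choose E = diagonal α, v i = μ i - β i * sign (w i)
      refine ⟨Matrix.diagonal α, fun i => μ i - β i * Real.sign (w i), ?_, ?_, ?_, ?_⟩
      · exact Matrix.isSymm_diagonal α
      · intro i j
        by_cases h : i = j
        · subst h; simp [Matrix.diagonal_apply_eq, abs_of_pos (hα i)]
        · simp [Matrix.diagonal_apply_ne _ h]
      · intro i
        simp only [sub_sub_cancel_left, abs_neg, abs_mul, abs_of_nonneg (hβ i)]
        calc β i * |Real.sign (w i)|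
            ≤ β i * 1 := mul_le_mul_of_nonneg_left (abs_sign_le_one _) (hβ i)
          _ = β i := mul_one _
      · rw [hpen w, Matrix.add_mulVec, dotProduct_add]
        have h1 : w ⬝ᵥ (Matrix.diagonal α *ᵥ w) = ∑ i, α i * (w i) ^ 2 := by
          simp [dotProduct, Matrix.mulVec_diagonal]
          exact Finset.sum_congr rfl fun i _ => by ring
        have h2 : (fun i => μ i - β i * Real.sign (w i)) ⬝ᵥ w
            = w ⬝ᵥ μ - ∑ i, β i * |w i| := by
          simp only [dotProduct, sub_mul, Finset.sum_sub_distrib]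
          congr 1
          · exact Finset.sum_congr rfl fun i _ => mul_comm _ _
          · exact Finset.sum_congr rfl fun i _ => by
              rw [mul_assoc, real_sign_mul_self']
        rw [h1, h2]; ring
    · -- upper bound
      rintro x ⟨E, v, hE, hEle, hv, rfl⟩
      rw [hpen w, Matrix.add_mulVec, dotProduct_add]
      have h1 : w ⬝ᵥ (E *ᵥ w) ≤ ∑ i, α i * (w i) ^ 2 := by
        unfold dotProduct Matrix.mulVec
        apply Finset.sum_le_sum
        intro i _
        have hrow : (fun j => E i j) ⬝ᵥ w = E i i * w i := by
          unfold dotProduct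
          apply Finset.sum_eq_single i
          · intro j _ hji
            have : |E i j| ≤ 0 := by
              have := hEle i j
              rwa [Matrix.diagonal_apply_ne _ (Ne.symm hji)] at this
            have : E i j = 0 := abs_nonpos_iff.mp this
            simp [this]
          · intro h; exact absurd (Finset.mem_univ i) h
        rw [hrow]
        have hEii : |E i i| ≤ α i := by
          have := hEle i i
          rwa [Matrix.diagonal_apply_eq] at this
        calc w i * (E i i * w i) = E i i * (w i) ^ 2 := by ring
          _ ≤ |E i i| * (w i) ^ 2 :=
              mul_le_mul_of_nonneg_right (le_abs_self _) (sq_nonneg _)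
          _ ≤ α i * (w i) ^ 2 :=
              mul_le_mul_of_nonneg_right hEii (sq_nonneg _)
      have h2 : w ⬝ᵥ μ - ∑ i, β i * |w i| ≤ v ⬝ᵥ w := by
        have : ∀ i ∈ Finset.univ, μ i * w i - β i * |w i| ≤ v i * w i := by
          intro i _
          have h3 : (μ i - v i) * w i ≤ β i * |w i| := by
            calc (μ i - v i) * w i ≤ |(μ i - v i) * w i| := le_abs_self _
              _ = |μ i - v i| * |w i| := abs_mul _ _
              _ ≤ β i * |w i| := by
                  have := hv i
                  rw [abs_sub_comm] at this
                  exact mul_le_mul_of_nonneg_right this (abs_nonneg _)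
          nlinarith
        have := Finset.sum_le_sum this
        simp only [Finset.sum_sub_distrib] at this
        calc w ⬝ᵥ μ - ∑ i, β i * |w i|
            = ∑ i, μ i * w i - ∑ i, β i * |w i| := by
              simp [dotProduct, mul_comm]
          _ ≤ ∑ i, v i * w i := this
          _ = v ⬝ᵥ w := rfl
      linarith
  refine ⟨key, fun w0 => ?_⟩
  constructor <;> intro h w <;> [rw [← key w0, ← key w]; rw [key w0, key w]] <;> exact h w
end

section
/- Let R be symmetric positive definite with smallest eigenvalue at least α₀ > 0, μ̂ ∈ ℝ^N, β_i ≥ 0, and Ψ(w) = wᵀRw − wᵀμ̂ + Σ_i β_i|w_i|. Let w* be the minimizer of Ψ. Suppose w̃ ∈ ℝ^N satisfies: (a) Σ_{i ∈ supp(w̃)} ( (2Rw̃)_i − μ̂_i + β_i sgn(w̃_i) )² ≤ 2εα₀, and (b) |(2Rw̃)_i − μ̂_i| ≤ β_i for all i ∉ supp(w̃). Then Ψ(w̃) ≤ Ψ(w*) + ε. -/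
/-!
Write `v = w̃ + d` and `g = 2Rw̃ - μ̂`. Since `R` is symmetric,
`Ψ(w̃ + d) - Ψ(w̃) = dᵀRd + ∑ᵢ (gᵢdᵢ + βᵢ(|w̃ᵢ + dᵢ| - |w̃ᵢ|))`.
Off the support each summand is nonnegative by (b). On the support, the subgradient inequality
`|w̃ᵢ + dᵢ| - |w̃ᵢ| ≥ sgn(w̃ᵢ) dᵢ` bounds it below by `cᵢdᵢ ≥ -cᵢ²/(4α₀) - α₀dᵢ²`, where `cᵢ` is the
partial derivative of `Ψ`. The terms `-α₀dᵢ²` are absorbed by `dᵀRd ≥ α₀‖d‖²`, so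
`Ψ(w̃) ≤ Ψ(v) + ∑_{supp w̃} cᵢ²/(4α₀) ≤ Ψ(v) + ε/2`.
-/

open Matrix BigOperators Finset

theorem Real.sign_mul_sub_le_abs_sub_abs (a b : ℝ) : Real.sign a * (b - a) ≤ |b| - |a| := by
  rcases lt_trichotomy a 0 with ha | rfl | ha
  · rw [Real.sign_of_neg ha, abs_of_neg ha]
    linarith [neg_abs_le b]
  · simp
  · rw [Real.sign_of_pos ha, abs_of_pos ha]
    linarith [le_abs_self b]

theorem neg_sq_div_sub_mul_sq_le_mul {α : ℝ} (hα : 0 < α) (c d : ℝ) :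
    -(c ^ 2 / (4 * α)) - α * d ^ 2 ≤ c * d := by
  have hsq := div_nonneg (sq_nonneg (c + 2 * α * d)) (by positivity : (0 : ℝ) ≤ 4 * α)
  have hexpand : (c + 2 * α * d) ^ 2 / (4 * α) = c ^ 2 / (4 * α) + c * d + α * d ^ 2 := by
    field_simp
    ring
  linarith

theorem Matrix.IsSymm.dotProduct_mulVec_comm {ι : Type*} [Fintype ι] {R : Matrix ι ι ℝ}
    (hR : R.IsSymm) (v w : ι → ℝ) : v ⬝ᵥ (R *ᵥ w) = w ⬝ᵥ (R *ᵥ v) := by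
  rw [dotProduct_mulVec, ← mulVec_transpose, hR.eq, dotProduct_comm]

theorem mul_add_mul_abs_nonneg_of_abs_le {g β : ℝ} (h : |g| ≤ β) (d : ℝ) :
    0 ≤ g * d + β * |d| := by
  have hgd : |g * d| ≤ β * |d| := by
    rw [abs_mul]
    exact mul_le_mul_of_nonneg_right h (abs_nonneg d)
  linarith [neg_abs_le (g * d)]

theorem add_mul_sign_mul_le {β : ℝ} (hβ : 0 ≤ β) (g a d : ℝ) :
    (g + β * Real.sign a) * d ≤ g * d + β * (|a + d| - |a|) := by
  have h := mul_le_mul_of_nonneg_left (Real.sign_mul_sub_le_abs_sub_abs a (a + d)) hβ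
  rw [add_sub_cancel_left] at h
  linarith

namespace Lasso

variable {ι : Type*} [Fintype ι] (R : Matrix ι ι ℝ) (μ β : ι → ℝ)

def objective (w : ι → ℝ) : ℝ :=
  w ⬝ᵥ (R *ᵥ w) - w ⬝ᵥ μ + ∑ i, β i * |w i|

def smoothGrad (w : ι → ℝ) : ι → ℝ :=
  (2 : ℝ) • (R *ᵥ w) - μ

theorem smoothGrad_apply (w : ι → ℝ) (i : ι) : smoothGrad R μ w i = 2 * (R *ᵥ w) i - μ i :=
  rfl

variable {R μ β}

theorem objective_add_sub (hR : R.IsSymm) (w d : ι → ℝ) :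
    objective R μ β (w + d) - objective R μ β w =
      d ⬝ᵥ (R *ᵥ d) + ∑ i, (smoothGrad R μ w i * d i + β i * (|w i + d i| - |w i|)) := by
  have hlin : ∑ i, smoothGrad R μ w i * d i = 2 * (d ⬝ᵥ (R *ᵥ w)) - d ⬝ᵥ μ := by
    rw [← dotProduct, smoothGrad, sub_dotProduct, smul_dotProduct, dotProduct_comm,
      dotProduct_comm μ, smul_eq_mul]
  have hcross := hR.dotProduct_mulVec_comm w d
  simp only [sum_add_distrib, hlin, mul_sub, sum_sub_distrib, objective, mulVec_add,
    add_dotProduct, dotProduct_add, Pi.add_apply]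
  linarith

theorem objective_le_add (hR : R.IsSymm) {α : ℝ} (hα : 0 < α)
    (hcoercive : ∀ v, α * ∑ i, v i ^ 2 ≤ v ⬝ᵥ (R *ᵥ v)) (hβ : ∀ i, 0 ≤ β i) {w : ι → ℝ}
    (hzero : ∀ i, w i = 0 → |smoothGrad R μ w i| ≤ β i) (v : ι → ℝ) :
    objective R μ β w ≤ objective R μ β v +
      (∑ i ∈ univ.filter (fun i => w i ≠ 0),
        (smoothGrad R μ w i + β i * Real.sign (w i)) ^ 2) / (4 * α) := by
  set g := smoothGrad R μ w
  set c : ι → ℝ := fun i => g i + β i * Real.sign (w i)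
  set d := v - w
  set S := univ.filter (fun i => w i ≠ 0)
  have hincr := objective_add_sub (μ := μ) (β := β) hR w d
  rw [add_sub_cancel] at hincr
  have hoff : 0 ≤ ∑ i ∈ univ.filter (fun i => ¬ w i ≠ 0),
      (g i * d i + β i * (|w i + d i| - |w i|)) := by
    refine sum_nonneg fun i hi => ?_
    have hwi : w i = 0 := by simpa using hi
    simpa [hwi] using mul_add_mul_abs_nonneg_of_abs_le (hzero i hwi) (d i)
  have hon : ∑ i ∈ S, (-(c i ^ 2 / (4 * α)) - α * d i ^ 2) ≤
      ∑ i ∈ S, (g i * d i + β i * (|w i + d i| - |w i|)) :=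
    sum_le_sum fun i _ =>
      (neg_sq_div_sub_mul_sq_le_mul hα (c i) (d i)).trans (add_mul_sign_mul_le (hβ i) _ _ _)
  have hsq : α * ∑ i ∈ S, d i ^ 2 ≤ α * ∑ i, d i ^ 2 :=
    mul_le_mul_of_nonneg_left
      (sum_le_sum_of_subset_of_nonneg (subset_univ S) fun i _ _ => sq_nonneg (d i)) hα.le
  rw [sum_sub_distrib, sum_neg_distrib, ← sum_div, ← mul_sum] at hon
  rw [← sum_filter_add_sum_filter_not univ (fun i => w i ≠ 0)] at hincr
  linarith [hcoercive d]

end Lasso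

theorem stmt9_general (N : ℕ) (R : Matrix (Fin N) (Fin N) ℝ) (μ β : Fin N → ℝ)
    (α₀ : ℝ) (hα₀ : 0 < α₀)
    (hR : R.PosDef)
    (heig : ∀ v : Fin N → ℝ, α₀ * ∑ i, (v i) ^ 2 ≤ v ⬝ᵥ (R *ᵥ v))
    (hβ : ∀ i, 0 ≤ β i) (ε : ℝ) (hε : 0 < ε)
    (Ψ : (Fin N → ℝ) → ℝ)
    (hΨ : ∀ w, Ψ w = w ⬝ᵥ (R *ᵥ w) - w ⬝ᵥ μ + ∑ i, β i * |w i|)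
    (wstar wt : Fin N → ℝ)
    (ha : ∑ i ∈ Finset.univ.filter (fun i => wt i ≠ 0),
        (2 * (R *ᵥ wt) i - μ i + β i * Real.sign (wt i)) ^ 2 ≤ 2 * ε * α₀)
    (hb : ∀ i, wt i = 0 → |2 * (R *ᵥ wt) i - μ i| ≤ β i) :
    Ψ wt ≤ Ψ wstar + ε := by
  have hobj : Ψ = Lasso.objective R μ β := funext hΨ
  have hbound := Lasso.objective_le_add (isHermitian_iff_isSymm.mp hR.isHermitian) hα₀ heig hβ
    hb wstar
  have herr : (∑ i ∈ univ.filter (fun i => wt i ≠ 0),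
      (Lasso.smoothGrad R μ wt i + β i * Real.sign (wt i)) ^ 2) / (4 * α₀) ≤ ε := by
    have hεα₀ : 0 ≤ ε * α₀ := by positivity
    rw [div_le_iff₀ (by positivity)]
    simp only [Lasso.smoothGrad_apply]
    linarith
  rw [hobj]
  linarith

/-- Theorem 2, approximate optimality: if `w̃` satisfies the
approximate stationarity conditions, then `Ψ(w̃) ≤ Ψ(w*) + ε`. The condition
that the smallest eigenvalue of `R` is at least `α₀` is expressed via the
quadratic form bound `α₀‖v‖² ≤ vᵀRv`. -/
theorem stmt9 (N : ℕ) (R : Matrix (Fin N) (Fin N) ℝ) (μ β : Fin N → ℝ)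
    (α₀ : ℝ) (hα₀ : 0 < α₀)
    (hR : R.PosDef)
    (heig : ∀ v : Fin N → ℝ, α₀ * ∑ i, (v i) ^ 2 ≤ v ⬝ᵥ (R *ᵥ v))
    (hβ : ∀ i, 0 ≤ β i) (ε : ℝ) (hε : 0 < ε)
    (Ψ : (Fin N → ℝ) → ℝ)
    (hΨ : ∀ w, Ψ w = w ⬝ᵥ (R *ᵥ w) - w ⬝ᵥ μ + ∑ i, β i * |w i|)
    (wstar wt : Fin N → ℝ)
    (hstar : ∀ v, Ψ wstar ≤ Ψ v)
    (ha : ∑ i ∈ Finset.univ.filter (fun i => wt i ≠ 0),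
        (2 * (R *ᵥ wt) i - μ i + β i * Real.sign (wt i)) ^ 2 ≤ 2 * ε * α₀)
    (hb : ∀ i, wt i = 0 → |2 * (R *ᵥ wt) i - μ i| ≤ β i) :
    Ψ wt ≤ Ψ wstar + ε :=
  stmt9_general N R μ β α₀ hα₀ hR heig hβ ε hε Ψ hΨ wstar wt ha hb
end

section
/- Let Ψ(w) = wᵀRw − wᵀμ̂ + Σ_i β_i|w_i| with R symmetric positive definite and β_i ≥ 0. If x ∈ ℝ^N satisfies x_i = 0 and |(2Rx)_i − μ̂_i| > β_i for some index i, then x is not a minimizer of Ψ: there exists w with w_j = x_j for j ≠ i, w_i ≠ 0, and Ψ(w) < Ψ(x). -/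
open Matrix BigOperators

/-!
Move `x` along the `i`-th coordinate axis to `x + t eᵢ`. Since `xᵢ = 0`, the objective changes by
`g t + Rᵢᵢ t² + βᵢ |t|` with `g = (2Rx)ᵢ − μ̂ᵢ`, a one-variable function whose slope at `0` in the
direction `−sign g` is `βᵢ − |g| < 0`; as `Rᵢᵢ > 0`, the step `t = −sign g · (|g| − βᵢ) / (2Rᵢᵢ)`
halves that first-order decrease and makes the change negative.
-/

section LinearOrderedField

variable {𝕜 : Type*} [Field 𝕜] [LinearOrder 𝕜] [IsStrictOrderedRing 𝕜]

theorem exists_ne_zero_mul_add_mul_sq_add_mul_abs_neg_of_lt {a b g : 𝕜} (ha : 0 < a) (hb : b < g) :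
    ∃ t ≠ 0, g * t + a * t ^ 2 + b * |t| < 0 := by
  set ε := (g - b) / (2 * a)
  have hε : 0 < ε := div_pos (sub_pos.mpr hb) (by positivity)
  have hstep : 2 * a * ε = g - b := mul_div_cancel₀ _ (by positivity)
  refine ⟨-ε, neg_ne_zero.mpr hε.ne', ?_⟩
  have hvalue : g * -ε + a * (-ε) ^ 2 + b * |-ε| = -(ε * (g - b)) / 2 := by
    rw [abs_neg, abs_of_pos hε]
    linear_combination (ε / 2) * hstep
  rw [hvalue]
  have := mul_pos hε (sub_pos.mpr hb)
  linarith

theorem exists_ne_zero_mul_add_mul_sq_add_mul_abs_neg {a b g : 𝕜} (ha : 0 < a) (hb : b < |g|) :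
    ∃ t ≠ 0, g * t + a * t ^ 2 + b * |t| < 0 := by
  rcases lt_abs.mp hb with hg | hg
  · exact exists_ne_zero_mul_add_mul_sq_add_mul_abs_neg_of_lt ha hg
  · obtain ⟨t, ht, hneg⟩ := exists_ne_zero_mul_add_mul_sq_add_mul_abs_neg_of_lt ha hg
    exact ⟨-t, neg_ne_zero.mpr ht, by simpa [abs_neg] using hneg⟩

theorem sum_mul_abs_add_single {n : Type*} [Fintype n] [DecidableEq n] {x : n → 𝕜} {i : n}
    (hx : x i = 0) (β : n → 𝕜) (t : 𝕜) :
    ∑ j, β j * |(x + Pi.single i t : n → 𝕜) j| = ∑ j, β j * |x j| + β i * |t| := by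
  have hsplit : ∀ j,
      β j * |(x + Pi.single i t : n → 𝕜) j| = β j * |x j| + β j * |(Pi.single i t : n → 𝕜) j| := by
    intro j
    rcases eq_or_ne j i with rfl | hj
    · simp [hx]
    · simp [hj]
  have hsingle : ∑ j, β j * |(Pi.single i t : n → 𝕜) j| = β i * |t| := by
    rw [Fintype.sum_eq_single i fun j hj => by simp [hj]]
    simp
  rw [Finset.sum_congr rfl fun j _ => hsplit j, Finset.sum_add_distrib, hsingle]

end LinearOrderedField

namespace Matrix

variable {n R : Type*} [Fintype n] [DecidableEq n] [CommRing R]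

theorem add_single_dotProduct (x v : n → R) (i : n) (t : R) :
    (x + Pi.single i t) ⬝ᵥ v = x ⬝ᵥ v + t * v i := by
  rw [add_dotProduct, single_dotProduct]

theorem IsSymm.add_single_dotProduct_mulVec_add_single {A : Matrix n n R} (hA : A.IsSymm)
    (x : n → R) (i : n) (t : R) :
    (x + Pi.single i t) ⬝ᵥ A *ᵥ (x + Pi.single i t) =
      x ⬝ᵥ A *ᵥ x + 2 * (A *ᵥ x) i * t + A i i * t ^ 2 := by
  have hvecMul : x ᵥ* A = A *ᵥ x := by simpa [hA.eq] using vecMul_transpose A x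
  rw [mulVec_add, dotProduct_add, add_single_dotProduct, add_single_dotProduct,
    dotProduct_mulVec x A (Pi.single i t), hvecMul, dotProduct_single]
  simp only [mulVec_single, Pi.smul_apply, col_apply, MulOpposite.smul_eq_mul_unop,
    MulOpposite.unop_op]
  ring

end Matrix

theorem stmt12_general (N : ℕ) (R : Matrix (Fin N) (Fin N) ℝ) (μ β : Fin N → ℝ)
    (hR : R.PosDef)
    (Ψ : (Fin N → ℝ) → ℝ)
    (hΨ : ∀ w, Ψ w = w ⬝ᵥ (R *ᵥ w) - w ⬝ᵥ μ + ∑ i, β i * |w i|)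
    (x : Fin N → ℝ) (i : Fin N)
    (hx : x i = 0) (hgrad : β i < |2 * (R *ᵥ x) i - μ i|) :
    ∃ w : Fin N → ℝ, (∀ j, j ≠ i → w j = x j) ∧ w i ≠ 0 ∧ Ψ w < Ψ x := by
  obtain ⟨t, ht, hdecrease⟩ := exists_ne_zero_mul_add_mul_sq_add_mul_abs_neg hR.diag_pos hgrad
  refine ⟨x + Pi.single i t, fun j hj => by simp [hj], by simpa [hx] using ht, ?_⟩
  have hsymm : R.IsSymm := isHermitian_iff_isSymm.mp hR.isHermitian
  rw [hΨ, hΨ, hsymm.add_single_dotProduct_mulVec_add_single, add_single_dotProduct,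
    sum_mul_abs_add_single hx]
  linear_combination hdecrease

/-- If `x_i = 0` and `|(2Rx)_i − μ̂_i| > β_i` for some `i`, then
`x` is not a minimizer of `Ψ`: the objective can be decreased by making the
`i`-th weight nonzero. -/
theorem stmt12 (N : ℕ) (R : Matrix (Fin N) (Fin N) ℝ) (μ β : Fin N → ℝ)
    (hR : R.PosDef) (hβ : ∀ i, 0 ≤ β i)
    (Ψ : (Fin N → ℝ) → ℝ)
    (hΨ : ∀ w, Ψ w = w ⬝ᵥ (R *ᵥ w) - w ⬝ᵥ μ + ∑ i, β i * |w i|)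
    (x : Fin N → ℝ) (i : Fin N)
    (hx : x i = 0) (hgrad : β i < |2 * (R *ᵥ x) i - μ i|) :
    ∃ w : Fin N → ℝ, (∀ j, j ≠ i → w j = x j) ∧ w i ≠ 0 ∧ Ψ w < Ψ x :=
  stmt12_general N R μ β hR Ψ hΨ x i hx hgrad
end
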